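/- Let A be a unital C*-algebra and Z a bounded A-precompact subset of the standard module ℓ²_J(A) for some index set J. Then for every ε > 0 there exists a free finitely generated submodule L (the span of finitely many standard basis vectors) with dist(x, L) < ε for all x ∈ Z. -/

import Mathlib

open scoped RightActions

/-- The Hilbert C⋆-module class as it stood in the older Mathlib (right `A`-action via `Aᵐᵒᵖ`,
inner product linear in the second argument with respect to the right action). -/
class CStarModuleRight (A : outParam <| Type*) (E : Type*) [NonUnitalSemiring A] [StarRing A]
    [Module ℂ A] [AddCommGroup E] [Module ℂ E] [PartialOrder A] [SMul Aᵐᵒᵖ E] [Norm A] [Norm E]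
    extends Inner A E where
  inner_add_right {x} {y} {z} : inner x (y + z) = inner x y + inner x z
  inner_self_nonneg {x} : 0 ≤ inner x x
  inner_self {x} : inner x x = 0 ↔ x = 0
  inner_op_smul_right {a : A} {x y : E} : inner x (y <• a) = inner x y * a
  inner_smul_right_complex {z : ℂ} {x} {y} : inner x (z • y) = z • inner x y
  star_inner x y : star (inner x y) = inner y x
  norm_eq_sqrt_norm_inner_self x : ‖x‖ = Real.sqrt ‖inner x x‖

/-- Condition (a): `Z` can be approximated by `A`-linear combinations of finitely many
elements with uniformly bounded coefficients. -/
def APrecompactCond {A E : Type*} [NonUnitalCStarAlgebra A] [PartialOrder A]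
    [StarOrderedRing A] [NormedAddCommGroup E] [NormedSpace ℂ E] [SMul Aᵐᵒᵖ E]
    [CStarModuleRight A E] (Z : Set E) : Prop :=
  ∀ ε > (0 : ℝ), ∃ M > (0 : ℝ), ∃ (s : ℕ) (z : Fin s → E),
    ∀ x ∈ Z, ∃ a : Fin s → A, (∀ k, ‖a k‖ ≤ M) ∧ ‖x - ∑ k, z k <• a k‖ < ε

section Aux

variable {A E : Type*} [CStarAlgebra A] [PartialOrder A] [StarOrderedRing A]
    [NormedAddCommGroup E] [NormedSpace ℂ E] [SMul Aᵐᵒᵖ E] [CStarModuleRight A E]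

noncomputable def innerAddHom_aux (x : E) : E →+ A :=
  AddMonoidHom.mk' (fun y => inner A x y) (fun _ _ => CStarModuleRight.inner_add_right)

lemma inner_sub_right_aux (x y z : E) : (inner A x (y - z) : A) = inner A x y - inner A x z :=
  (innerAddHom_aux (A := A) x).map_sub y z

lemma inner_sum_right_aux {ι : Type*} (t : Finset ι) (x : E) (f : ι → E) :
    (inner A x (∑ i ∈ t, f i) : A) = ∑ i ∈ t, (inner A x (f i) : A) :=
  map_sum (innerAddHom_aux (A := A) x) f t

lemma ext_inner_aux {u v : E} (h : ∀ w : E, (inner A w u : A) = inner A w v) : u = v := by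
  have h0 : (inner A (u - v) (u - v) : A) = 0 := by
    rw [inner_sub_right_aux, h (u - v), sub_self]
  exact sub_eq_zero.mp (CStarModuleRight.inner_self.mp h0)

lemma norm_op_smul_le_aux (y : E) (a : A) : ‖y <• a‖ ≤ ‖y‖ * ‖a‖ := by
  have hsq : ∀ w : E, ‖w‖ ^ 2 = ‖(inner A w w : A)‖ := fun w => by
    rw [CStarModuleRight.norm_eq_sqrt_norm_inner_self w, Real.sq_sqrt (norm_nonneg _)]
  have h1 : (inner A (y <• a) (y <• a) : A) = star a * inner A y y * a := by
    rw [CStarModuleRight.inner_op_smul_right, ← CStarModuleRight.star_inner y (y <• a),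
      CStarModuleRight.inner_op_smul_right, star_mul, CStarModuleRight.star_inner]
  have key : ‖y <• a‖ ^ 2 ≤ (‖y‖ * ‖a‖) ^ 2 := by
    rw [hsq (y <• a), mul_pow, hsq y, h1]
    calc ‖star a * (inner A y y : A) * a‖ ≤ ‖star a * (inner A y y : A)‖ * ‖a‖ := norm_mul_le _ _
      _ ≤ ‖star a‖ * ‖(inner A y y : A)‖ * ‖a‖ := by gcongr; exact norm_mul_le _ _
      _ = ‖(inner A y y : A)‖ * ‖a‖ ^ 2 := by rw [norm_star]; ring
  nlinarith [key, norm_nonneg (y <• a), mul_nonneg (norm_nonneg y) (norm_nonneg a)]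

lemma op_smul_sub_aux (u v : E) (a : A) : (u - v) <• a = u <• a - v <• a := by
  apply ext_inner_aux (A := A)
  intro w
  simp only [CStarModuleRight.inner_op_smul_right, inner_sub_right_aux, sub_mul]

end Aux

/-- Let `A` be a unital C*-algebra and `E` the standard module `ℓ²_J(A)`, presented by its
standard basis `{e_j}_{j∈J}` (an orthonormal Parseval family with reconstruction
`x = Σ_j e_j⟨e_j,x⟩`).  If `Z ⊆ E` is bounded and `A`-precompact, then for every `ε > 0`
there is a finite set `J'` of basis indices such that every `x ∈ Z` is within `ε` of the
free finitely generated submodule spanned by `{e_j}_{j∈J'}`. -/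
theorem stmt_9 {A E : Type*} [CStarAlgebra A] [PartialOrder A] [StarOrderedRing A]
    [NormedAddCommGroup E] [NormedSpace ℂ E] [SMul Aᵐᵒᵖ E] [CStarModuleRight A E] [CompleteSpace E]
    {J : Type*} [DecidableEq J] (e : J → E)
    (he : ∀ i j, (inner A (e i) (e j) : A) = if i = j then 1 else 0)
    (hrec : ∀ x : E, HasSum (fun j => e j <• (inner A (e j) x : A)) x)
    (Z : Set E) (hZb : Bornology.IsBounded Z) (hZ : APrecompactCond (A := A) Z) :
    ∀ ε > (0 : ℝ), ∃ J' : Finset J, ∀ x ∈ Z, ∃ a : J → A,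
      ‖x - ∑ j ∈ J', e j <• a j‖ < ε := by
  intro ε hε
  obtain ⟨M, hM, s, z, hz⟩ := hZ (ε / 2) (by positivity)
  set δ : ℝ := ε / (2 * (s + 1) * M) with hδdef
  have hδ : 0 < δ := by positivity
  -- for each k, choose a finset beyond which partial reconstruction sums are δ-close to z k
  have hF : ∀ k : Fin s, ∃ F₀ : Finset J, ∀ F : Finset J, F₀ ⊆ F →
      ‖z k - ∑ j ∈ F, e j <• (inner A (e j) (z k) : A)‖ < δ := by
    intro k
    have := (hrec (z k))
    change Filter.Tendsto (fun s => ∑ b ∈ s, e b <• (inner A (e b) (z k) : A)) Filter.atTop _ at this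
    rw [Metric.tendsto_atTop] at this
    obtain ⟨F₀, hF₀⟩ := this δ hδ
    exact ⟨F₀, fun F hF => by
      have := hF₀ F hF
      rwa [dist_eq_norm, ← norm_neg, neg_sub] at this⟩
  choose F hFspec using hF
  refine ⟨Finset.univ.biUnion F, fun x hx => ?_⟩
  obtain ⟨a, haM, hax⟩ := hz x hx
  set J' : Finset J := Finset.univ.biUnion F
  -- the approximating coefficients
  refine ⟨fun j => ∑ k, (inner A (e j) (z k) : A) * a k, ?_⟩
  set p : Fin s → E := fun k => ∑ j ∈ J', e j <• (inner A (e j) (z k) : A) with hp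
  have hkey : ∑ j ∈ J', e j <• (∑ k, (inner A (e j) (z k) : A) * a k)
      = ∑ k, p k <• a k := by
    apply ext_inner_aux (A := A)
    intro w
    simp only [inner_sum_right_aux, CStarModuleRight.inner_op_smul_right, hp,
      Finset.mul_sum, Finset.sum_mul, mul_assoc]
    exact Finset.sum_comm
  have hpk : ∀ k, ‖z k - p k‖ < δ := fun k =>
    hFspec k J' (Finset.subset_biUnion_of_mem F (Finset.mem_univ k))
  rw [hkey]
  have hsplit : x - ∑ k, p k <• a k
      = (x - ∑ k, z k <• a k) + ∑ k, (z k - p k) <• a k := by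
    have : ∀ k : Fin s, (z k - p k) <• a k = z k <• a k - p k <• a k := fun k =>
      op_smul_sub_aux (A := A) (z k) (p k) (a k)
    simp only [this, Finset.sum_sub_distrib]
    abel
  rw [hsplit]
  calc ‖(x - ∑ k, z k <• a k) + ∑ k, (z k - p k) <• a k‖
      ≤ ‖x - ∑ k, z k <• a k‖ + ‖∑ k, (z k - p k) <• a k‖ := norm_add_le _ _
    _ ≤ ‖x - ∑ k, z k <• a k‖ + ∑ k, ‖(z k - p k) <• a k‖ := by
        gcongr; exact norm_sum_le _ _
    _ < ε / 2 + ∑ k : Fin s, δ * M := by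
        rcases Nat.eq_zero_or_pos s with hs | hs
        · subst hs; simpa using hax
        · apply add_lt_add_of_lt_of_le hax
          apply Finset.sum_le_sum
          intro k _
          calc ‖(z k - p k) <• a k‖ ≤ ‖z k - p k‖ * ‖a k‖ := norm_op_smul_le_aux _ _
            _ ≤ δ * M := by
                apply mul_le_mul (le_of_lt (hpk k)) (haM k) (norm_nonneg _) (le_of_lt hδ)
    _ = ε / 2 + s * (δ * M) := by rw [Finset.sum_const, Finset.card_univ, Fintype.card_fin,
          nsmul_eq_mul]
    _ < ε := by
        have hδM : δ * M = ε / (2 * ((s : ℝ) + 1)) := by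
          rw [hδdef]
          field_simp
        rw [hδM]
        have h1 : (s : ℝ) * (ε / (2 * ((s : ℝ) + 1))) < ε / 2 := by
          have heq : (s : ℝ) * (ε / (2 * ((s : ℝ) + 1))) = ((s : ℝ) / ((s : ℝ) + 1)) * (ε / 2) := by
            have h0 : ((s : ℝ) + 1) ≠ 0 := by positivity
            field_simp
          rw [heq]
          have hlt : (s : ℝ) / ((s : ℝ) + 1) < 1 :=
            (div_lt_one (by positivity)).mpr (by linarith [Nat.cast_nonneg (α := ℝ) s])
          calc ((s : ℝ) / ((s : ℝ) + 1)) * (ε / 2) < 1 * (ε / 2) :=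
                mul_lt_mul_of_pos_right hlt (by linarith)
            _ = ε / 2 := one_mul _
        linarith
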